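/- (Lemma A.3) Assume ℓ > 4 and let (j, m) be a stationary solution. Then 2j = −m(ℓ/2 − 1)/(ℓ/2 − 1) < (ℓ/2 − 1)^{−1}, and m(ℓ/2 + 1) = −m(ℓ/2 − 1) > 0. -/

import Mathlib

open Real Set

/-- The force profile `g(x) = ∫_{x-1}^x 1_{y ≤ ℓ/2} dy − ∫_x^{x+1} 1_{y ≤ ℓ/2} dy`. -/
noncomputable def gfun (ℓ : ℝ) (x : ℝ) : ℝ :=
  (∫ y in (x - 1)..x, if y ≤ ℓ / 2 then (1 : ℝ) else 0) -
  (∫ y in x..(x + 1), if y ≤ ℓ / 2 then (1 : ℝ) else 0)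

/-- An IVP solution with parameter `j`: a differentiable `m` on `[0, ℓ]` with `m 0 = 0`
and `m'(x) = -2j + βλ(1 - m(x)²) g(x)` on `[0, ℓ]`. -/
def IsIVPSolution (β lam ℓ j : ℝ) (m : ℝ → ℝ) : Prop :=
  m 0 = 0 ∧ ∀ x ∈ Icc (0 : ℝ) ℓ,
    HasDerivAt m (-2 * j + β * lam * (1 - m x ^ 2) * gfun ℓ x) x

/-- A stationary solution: an IVP solution which also satisfies `m ℓ = 0`. -/
def IsStationarySolution (β lam ℓ j : ℝ) (m : ℝ → ℝ) : Prop :=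
  IsIVPSolution β lam ℓ j m ∧ m ℓ = 0


/-!
Where `g` vanishes, i.e. on `[0, ℓ/2 - 1]` and `[ℓ/2 + 1, ℓ]`, `m` is affine with slope `-2j`;
with `m 0 = m ℓ = 0` this gives `m (ℓ/2 - 1) = -2j (ℓ/2 - 1) = -m (ℓ/2 + 1)`.
The rest is a barrier argument, since at a level `c` the slope of `m` is `-2j + βλ(1 - c²)g`:
if `j < 0` then `m` cannot cross `0` downwards, contradicting `m (ℓ/2 + 1) < 0`; if `j = 0` then `m`
stays in `[-1/2, 1]`, hence is nondecreasing on `[ℓ/2 - 1, ℓ/2 + 1]` and, vanishing at both ends,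
is zero there, contradicting `m' (ℓ/2) = βλ`; and if `j > 0` then `m` cannot cross `-1` upwards,
which forces `m (ℓ/2 - 1) > -1`.
-/

open MeasureTheory

theorem intervalIntegral_ite_le_of_le {u v : ℝ} (c : ℝ) (huv : u ≤ v) :
    ∫ y in u..v, (if y ≤ c then (1 : ℝ) else 0) = min v c - min u c := by
  have hind : (fun y : ℝ => if y ≤ c then (1 : ℝ) else 0) = (Iic c).indicator 1 := by
    ext y; simp [indicator_apply]
  rw [hind, intervalIntegral.integral_of_le huv, integral_indicator_one measurableSet_Iic,
    Measure.real_def, Measure.restrict_apply measurableSet_Iic, inter_comm, Ioc_inter_Iic,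
    ← Measure.real_def, volume_real_Ioc]
  rcases le_total u c with h | h
  · rw [min_eq_left h, max_eq_left (by simp [huv, h])]
  · rw [min_eq_right h, min_eq_right (h.trans huv), max_eq_right (by linarith)]; ring

theorem intervalIntegral_ite_le (u v c : ℝ) :
    ∫ y in u..v, (if y ≤ c then (1 : ℝ) else 0) = min v c - min u c := by
  rcases le_total u v with huv | hvu
  · exact intervalIntegral_ite_le_of_le c huv
  · rw [intervalIntegral.integral_symm, intervalIntegral_ite_le_of_le c hvu, neg_sub]

theorem gfun_eq (ℓ x : ℝ) :
    gfun ℓ x = 2 * min x (ℓ / 2) - min (x - 1) (ℓ / 2) - min (x + 1) (ℓ / 2) := by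
  rw [gfun, intervalIntegral_ite_le, intervalIntegral_ite_le]
  ring

theorem gfun_nonneg (ℓ x : ℝ) : 0 ≤ gfun ℓ x := by
  rw [gfun_eq]
  rcases le_total x (ℓ / 2) with h | h
  · rw [min_eq_left h, min_eq_left (by linarith)]
    linarith [min_le_left (x + 1) (ℓ / 2)]
  · rw [min_eq_right h, min_eq_right (by linarith : ℓ / 2 ≤ x + 1)]
    linarith [min_le_right (x - 1) (ℓ / 2)]

theorem gfun_pos {ℓ x : ℝ} (h₁ : ℓ / 2 - 1 < x) (h₂ : x < ℓ / 2 + 1) : 0 < gfun ℓ x := by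
  rw [gfun_eq, min_eq_left (by linarith : x - 1 ≤ ℓ / 2),
    min_eq_right (by linarith : ℓ / 2 ≤ x + 1)]
  rcases le_total x (ℓ / 2) with h | h
  · rw [min_eq_left h]; linarith
  · rw [min_eq_right h]; linarith

theorem gfun_eq_zero_of_le {ℓ x : ℝ} (h : x ≤ ℓ / 2 - 1) : gfun ℓ x = 0 := by
  rw [gfun_eq, min_eq_left (by linarith), min_eq_left (by linarith), min_eq_left (by linarith)]
  ring

theorem gfun_eq_zero_of_ge {ℓ x : ℝ} (h : ℓ / 2 + 1 ≤ x) : gfun ℓ x = 0 := by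
  rw [gfun_eq, min_eq_right (by linarith), min_eq_right (by linarith), min_eq_right (by linarith)]
  ring

section Calculus

variable {f f' : ℝ → ℝ} {s t c : ℝ}

theorem sub_eq_mul_of_hasDerivAt_const (hst : s ≤ t)
    (hf : ∀ x ∈ Icc s t, HasDerivAt f c x) : f t - f s = c * (t - s) := by
  rw [← intervalIntegral.integral_eq_sub_of_hasDerivAt (f' := fun _ => c)
    (by rwa [uIcc_of_le hst]) intervalIntegrable_const, intervalIntegral.integral_const,
    smul_eq_mul, mul_comm]

theorem image_le_of_deriv_neg_at_level (hf : ∀ x ∈ Icc s t, HasDerivAt f (f' x) x)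
    (hs : f s ≤ c) (hc : ∀ x ∈ Ico s t, f x = c → f' x < 0) : ∀ x ∈ Icc s t, f x ≤ c :=
  image_le_of_deriv_right_lt_deriv_boundary (fun x hx => (hf x hx).continuousAt.continuousWithinAt)
    (fun x hx => (hf x (Ico_subset_Icc_self hx)).hasDerivWithinAt) hs
    (fun _ => hasDerivAt_const _ c) hc

theorem le_image_of_deriv_pos_at_level (hf : ∀ x ∈ Icc s t, HasDerivAt f (f' x) x)
    (hs : c ≤ f s) (hc : ∀ x ∈ Ico s t, f x = c → 0 < f' x) : ∀ x ∈ Icc s t, c ≤ f x :=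
  image_le_of_deriv_right_lt_deriv_boundary' continuousOn_const
    (fun _ _ => hasDerivWithinAt_const _ _ c) hs
    (fun x hx => (hf x hx).continuousAt.continuousWithinAt)
    (fun x hx => (hf x (Ico_subset_Icc_self hx)).hasDerivWithinAt) (fun x hx h => hc x hx h.symm)

end Calculus

namespace IsIVPSolution

variable {β lam ℓ j : ℝ} {m : ℝ → ℝ}

theorem hasDerivAt_of_le (hm : IsIVPSolution β lam ℓ j m) {x : ℝ} (hx : x ∈ Icc 0 (ℓ / 2 - 1)) :
    HasDerivAt m (-2 * j) x := by
  simpa [gfun_eq_zero_of_le hx.2] using hm.2 x ⟨hx.1, by linarith [hx.1, hx.2]⟩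

theorem hasDerivAt_of_ge (hm : IsIVPSolution β lam ℓ j m) {x : ℝ} (hx : x ∈ Icc (ℓ / 2 + 1) ℓ) :
    HasDerivAt m (-2 * j) x := by
  simpa [gfun_eq_zero_of_ge hx.1] using hm.2 x ⟨by linarith [hx.1, hx.2], hx.2⟩

theorem apply_of_le (hm : IsIVPSolution β lam ℓ j m) {x : ℝ} (hx : x ∈ Icc 0 (ℓ / 2 - 1)) :
    m x = -2 * j * x := by
  have := sub_eq_mul_of_hasDerivAt_const hx.1
    fun y hy => hm.hasDerivAt_of_le ⟨hy.1, hy.2.trans hx.2⟩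
  rw [hm.1] at this
  linarith

theorem nonneg_of_current_neg (hm : IsIVPSolution β lam ℓ j m) (hβ : 0 ≤ β) (hlam : 0 ≤ lam)
    (hj : j < 0) : ∀ x ∈ Icc 0 ℓ, 0 ≤ m x :=
  le_image_of_deriv_pos_at_level hm.2 hm.1.ge fun x hx hmx => by
    have := mul_nonneg (mul_nonneg hβ hlam) (gfun_nonneg ℓ x)
    simp only [hmx]
    linarith

theorem sq_le_one_of_current_zero (hm : IsIVPSolution β lam ℓ 0 m) (hβ : 0 < β) (hlam : 0 < lam)
    (hℓ : 2 ≤ ℓ) : ∀ x ∈ Icc (ℓ / 2 - 1) (ℓ / 2 + 1), m x ^ 2 ≤ 1 := by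
  have hma : m (ℓ / 2 - 1) = 0 := by simpa using hm.apply_of_le ⟨by linarith, le_rfl⟩
  have hderiv : ∀ x ∈ Icc (ℓ / 2 - 1) (ℓ / 2 + 1),
      HasDerivAt m (β * lam * (1 - m x ^ 2) * gfun ℓ x) x := fun x hx => by
    simpa using hm.2 x ⟨by linarith [hx.1], by linarith [hx.2]⟩
  -- A point where `m ≠ 0` is not the left end, the only point of `[ℓ/2 - 1, ℓ/2 + 1)` with `g = 0`.
  have hg : ∀ x ∈ Ico (ℓ / 2 - 1) (ℓ / 2 + 1), m x ≠ 0 → 0 < β * lam * gfun ℓ x :=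
    fun x hx hmx => mul_pos (mul_pos hβ hlam) <| gfun_pos
      (lt_of_le_of_ne hx.1 fun h => hmx (h ▸ hma)) hx.2
  intro x hx
  have hlow : -1 / 2 ≤ m x := le_image_of_deriv_pos_at_level hderiv (by rw [hma]; norm_num)
    (fun y hy hmy => by have := hg y hy (by rw [hmy]; norm_num); rw [hmy]; nlinarith) x hx
  have hup : m x ≤ 1 := le_of_forall_gt_imp_ge_of_dense fun c hc =>
    image_le_of_deriv_neg_at_level hderiv (by rw [hma]; linarith)
      (fun y hy hmy => by
        have := mul_pos (hg y hy (by rw [hmy]; linarith)) (by nlinarith : 0 < c ^ 2 - 1)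
        rw [hmy]; linarith) x hx
  nlinarith

theorem monotoneOn_of_current_zero (hm : IsIVPSolution β lam ℓ 0 m) (hβ : 0 < β) (hlam : 0 < lam)
    (hℓ : 2 ≤ ℓ) : MonotoneOn m (Icc (ℓ / 2 - 1) (ℓ / 2 + 1)) := by
  have hmem : ∀ x ∈ Icc (ℓ / 2 - 1) (ℓ / 2 + 1), x ∈ Icc 0 ℓ :=
    fun x hx => ⟨by linarith [hx.1], by linarith [hx.2]⟩
  refine monotoneOn_of_hasDerivWithinAt_nonneg (convex_Icc _ _)
    (fun x hx => (hm.2 x (hmem x hx)).continuousAt.continuousWithinAt)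
    (fun x hx => (hm.2 x (hmem x (interior_subset hx))).hasDerivWithinAt) fun x hx => ?_
  have hx := interior_subset hx
  have := hm.sq_le_one_of_current_zero hβ hlam hℓ x hx
  have := mul_nonneg (mul_nonneg (mul_pos hβ hlam).le (sub_nonneg.2 this)) (gfun_nonneg ℓ x)
  linarith

end IsIVPSolution

namespace IsStationarySolution

variable {β lam ℓ j : ℝ} {m : ℝ → ℝ}

theorem apply_of_ge (hm : IsStationarySolution β lam ℓ j m) {x : ℝ} (hx : x ∈ Icc (ℓ / 2 + 1) ℓ) :
    m x = 2 * j * (ℓ - x) := by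
  have := sub_eq_mul_of_hasDerivAt_const hx.2
    fun y hy => hm.1.hasDerivAt_of_ge ⟨hx.1.trans hy.1, hy.2⟩
  rw [hm.2] at this
  linarith

theorem apply_add_one (hm : IsStationarySolution β lam ℓ j m) (hℓ : 2 ≤ ℓ) :
    m (ℓ / 2 + 1) = -m (ℓ / 2 - 1) := by
  rw [hm.apply_of_ge ⟨le_rfl, by linarith⟩, hm.1.apply_of_le ⟨by linarith, le_rfl⟩]
  ring

theorem current_ne_zero (hm : IsStationarySolution β lam ℓ j m) (hβ : 0 < β) (hlam : 0 < lam)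
    (hℓ : 2 ≤ ℓ) : j ≠ 0 := by
  rintro rfl
  have hma : m (ℓ / 2 - 1) = 0 := by simpa using hm.1.apply_of_le ⟨by linarith, le_rfl⟩
  have hmb : m (ℓ / 2 + 1) = 0 := by rw [hm.apply_add_one hℓ, hma, neg_zero]
  have hzero : ∀ x ∈ Icc (ℓ / 2 - 1) (ℓ / 2 + 1), m x = 0 := fun x hx => by
    have hmono := hm.1.monotoneOn_of_current_zero hβ hlam hℓ
    have := hmono ⟨le_rfl, by linarith⟩ hx hx.1
    have := hmono hx ⟨by linarith, le_rfl⟩ hx.2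
    linarith
  have hderiv₀ : HasDerivAt m 0 (ℓ / 2) := (hasDerivAt_const _ (0 : ℝ)).congr_of_eventuallyEq <|
    Filter.eventually_of_mem (Icc_mem_nhds (by linarith) (by linarith)) hzero
  have hderiv := hm.1.2 (ℓ / 2) ⟨by linarith, by linarith⟩
  rw [hzero _ ⟨by linarith, by linarith⟩] at hderiv
  have := mul_pos (mul_pos hβ hlam) (gfun_pos (ℓ := ℓ) (x := ℓ / 2) (by linarith) (by linarith))
  linarith [hderiv₀.unique hderiv]

theorem current_pos (hm : IsStationarySolution β lam ℓ j m) (hβ : 0 < β) (hlam : 0 < lam)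
    (hℓ : 2 < ℓ) : 0 < j := by
  refine (lt_or_gt_of_ne (hm.current_ne_zero hβ hlam hℓ.le)).resolve_left fun hj => ?_
  have := hm.1.nonneg_of_current_neg hβ.le hlam.le hj (ℓ / 2 + 1) ⟨by linarith, by linarith⟩
  rw [hm.apply_of_ge ⟨le_rfl, by linarith⟩] at this
  nlinarith

theorem neg_one_lt_apply_sub_one (hm : IsStationarySolution β lam ℓ j m) (hj : 0 < j)
    (hℓ : 2 ≤ ℓ) : -1 < m (ℓ / 2 - 1) := by
  by_contra! hle
  have := image_le_of_deriv_neg_at_level (c := -1)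
    (fun x hx => hm.1.2 x ⟨by linarith [hx.1], by linarith [hx.2]⟩) hle
    (fun x _ hmx => by rw [hmx]; linarith) (ℓ / 2 + 1) ⟨by linarith, le_rfl⟩
  rw [hm.apply_add_one hℓ] at this
  linarith

end IsStationarySolution

/-- Lemma A.3. -/
theorem stationary_current_formula (β lam ℓ : ℝ) (hβ : 0 < β) (hlam : 0 < lam) (hℓ : 4 < ℓ)
    (j : ℝ) (m : ℝ → ℝ) (hm : IsStationarySolution β lam ℓ j m) :
    2 * j = -(m (ℓ / 2 - 1)) / (ℓ / 2 - 1) ∧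
    2 * j < (ℓ / 2 - 1)⁻¹ ∧
    m (ℓ / 2 + 1) = -(m (ℓ / 2 - 1)) ∧
    0 < m (ℓ / 2 + 1) := by
  have ha : 0 < ℓ / 2 - 1 := by linarith
  have hj := hm.current_pos hβ hlam (by linarith)
  have hleft := hm.1.apply_of_le ⟨ha.le, le_rfl⟩
  have hlow := hm.neg_one_lt_apply_sub_one hj (by linarith)
  have hsymm := hm.apply_add_one (by linarith)
  refine ⟨?_, ?_, hsymm, ?_⟩
  · rw [eq_div_iff ha.ne', hleft]
    ring
  · rw [← one_div, lt_div_iff₀ ha]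
    linarith
  · rw [hsymm, hleft]
    nlinarith
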